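/- Let ρ be an n×n density matrix with eigenvalues 0 ≤ λ₁ ≤ λ₂ ≤ ⋯ ≤ λ_n, let A, B be n×n self-adjoint complex matrices, and let q ∈ ℝ with −1 ≤ q < 0. Then (λ_n − qλ₁)²·|Tr[ρ{A₀,B₀}_q]|² = (λ_n − qλ₁)²·|Tr[ρ[A₀,B₀]_{−q}]|², and (λ_n − qλ₁)²·|Tr[ρ{A₀,B₀}_q]|² ≤ (1−q)²·(λ_n + qλ₁)²·V_ρ(A)·V_ρ(B). -/

import Mathlib

/-!
Work in an orthonormal eigenbasis of `ρ`, with eigenvalues `μᵢ ∈ [λ₁, λₙ]`, and let `X`, `Y` be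
the matrices of `A₀`, `B₀` in it. Then `Tr[ρ{A₀,B₀}_q] = ∑ᵢⱼ (μᵢ + q μⱼ) Xᵢⱼ Yⱼᵢ` and
`V_ρ(A) = ∑ᵢⱼ μᵢ |Xᵢⱼ|²`. Cauchy–Schwarz with weights `|μᵢ + q μⱼ|` bounds `|Tr[ρ{A₀,B₀}_q]|²` by
the product of `∑ᵢⱼ |μᵢ + q μⱼ| |Xᵢⱼ|²` and the same sum for `Y`. As `|Xᵢⱼ| = |Xⱼᵢ|`, this sum may
be symmetrized in `(i, j)`, and the elementary inequality
`(λₙ − qλ₁)(|x + qy| + |y + qx|) ≤ (1 − q)(λₙ + qλ₁)(x + y)` for `x, y ∈ [λ₁, λₙ]`, `−1 ≤ q ≤ 0`,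
bounds `(λₙ − qλ₁)` times it by `(1 − q)(λₙ + qλ₁) V_ρ(A)`.
-/

open Matrix ComplexOrder

/-- `A₀ = A - Tr[ρA]·I`, the centered operator. -/
noncomputable def shift {n : ℕ} (ρ A : Matrix (Fin n) (Fin n) ℂ) : Matrix (Fin n) (Fin n) ℂ :=
  A - (ρ * A).trace • (1 : Matrix (Fin n) (Fin n) ℂ)

/-- `V_ρ(A) = Tr[ρA²] - (Tr[ρA])²` (a real number for self-adjoint `A` and density `ρ`). -/
noncomputable def variance {n : ℕ} (ρ A : Matrix (Fin n) (Fin n) ℂ) : ℝ :=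
  ((ρ * (A * A)).trace - ((ρ * A).trace) ^ 2).re

/-- the q-commutator `[A,B]_q = AB - q·BA`. -/
noncomputable def qComm {n : ℕ} (q : ℝ) (A B : Matrix (Fin n) (Fin n) ℂ) :
    Matrix (Fin n) (Fin n) ℂ :=
  A * B - (q : ℂ) • (B * A)

/-- the q-anti-commutator `{A,B}_q = AB + q·BA`. -/
noncomputable def qAnti {n : ℕ} (q : ℝ) (A B : Matrix (Fin n) (Fin n) ℂ) :
    Matrix (Fin n) (Fin n) ℂ :=
  A * B + (q : ℂ) • (B * A)

/-- `lam` lists the eigenvalues of `ρ` (with multiplicity) in increasing order. -/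
def IsOrderedEigenvalues {n : ℕ} {ρ : Matrix (Fin n) (Fin n) ℂ}
    (hρ : ρ.IsHermitian) (lam : Fin n → ℝ) : Prop :=
  Monotone lam ∧ ∃ σ : Equiv.Perm (Fin n), ∀ i, lam i = hρ.eigenvalues (σ i)

open Finset

lemma abs_add_mul_add_abs_add_mul_le {a b x y q : ℝ} (ha : 0 ≤ a) (hx : x ∈ Set.Icc a b)
    (hy : y ∈ Set.Icc a b) (hq0 : -1 ≤ q) (hq1 : q ≤ 0) :
    (b - q * a) * (|x + q * y| + |y + q * x|) ≤ (1 - q) * (b + q * a) * (x + y) := by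
  obtain ⟨hax, hxb⟩ := hx
  obtain ⟨hay, hyb⟩ := hy
  have hx0 : 0 ≤ x := ha.trans hax
  have hy0 : 0 ≤ y := ha.trans hay
  rcases abs_cases (x + q * y) with ⟨h1, hs1⟩ | ⟨h1, hs1⟩ <;>
    rcases abs_cases (y + q * x) with ⟨h2, hs2⟩ | ⟨h2, hs2⟩ <;> rw [h1, h2]
  · nlinarith [mul_nonneg (neg_nonneg.2 hq1) (sub_nonneg.2 (hax.trans hxb)), mul_nonneg hx0 hy0]
  · nlinarith [mul_nonneg (sub_nonneg.2 hay) hx0, mul_nonneg (sub_nonneg.2 hxb) hy0,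
      mul_nonneg (neg_le_iff_add_nonneg.1 hq0) (mul_nonneg hx0 ha),
      mul_nonneg (neg_nonneg.2 hq1) (mul_nonneg (sub_nonneg.2 hax) hx0)]
  · nlinarith [mul_nonneg (sub_nonneg.2 hax) hy0, mul_nonneg (sub_nonneg.2 hyb) hx0,
      mul_nonneg (neg_le_iff_add_nonneg.1 hq0) (mul_nonneg hy0 ha),
      mul_nonneg (neg_nonneg.2 hq1) (mul_nonneg (sub_nonneg.2 hay) hy0)]
  · nlinarith [mul_nonneg (neg_le_iff_add_nonneg.1 hq0) (add_nonneg hx0 hy0)]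

lemma norm_sum_mul_mul_sq_le {ι : Type*} [Fintype ι] (c : ι → ℝ) (f g : ι → ℂ) :
    ‖∑ k, (c k : ℂ) * (f k * g k)‖ ^ 2 ≤
      (∑ k, |c k| * ‖f k‖ ^ 2) * ∑ k, |c k| * ‖g k‖ ^ 2 := by
  have hnorm : ‖∑ k, (c k : ℂ) * (f k * g k)‖ ≤ ∑ k, |c k| * (‖f k‖ * ‖g k‖) :=
    (norm_sum_le _ _).trans_eq <| by simp only [norm_mul, Complex.norm_real, Real.norm_eq_abs]
  refine (pow_le_pow_left₀ (norm_nonneg _) hnorm 2).trans ?_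
  exact sum_sq_le_sum_mul_sum_of_sq_le_mul _ (fun k _ => by positivity) (fun k _ => by positivity)
    (fun k _ => le_of_eq (by ring))

namespace Matrix.IsHermitian

lemma norm_apply_swap {m : Type*} {Z : Matrix m m ℂ} (hZ : Z.IsHermitian) (i j : m) :
    ‖Z j i‖ = ‖Z i j‖ := by
  rw [← hZ.apply i j, norm_star]

variable {m : Type*} [Fintype m] [DecidableEq m] {ρ : Matrix m m ℂ}

noncomputable def inEigenbasis (hρ : ρ.IsHermitian) (M : Matrix m m ℂ) : Matrix m m ℂ :=
  star (hρ.eigenvectorUnitary : Matrix m m ℂ) * M * hρ.eigenvectorUnitary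

lemma isHermitian_inEigenbasis (hρ : ρ.IsHermitian) {M : Matrix m m ℂ} (hM : M.IsHermitian) :
    (hρ.inEigenbasis M).IsHermitian := by
  simp [inEigenbasis, IsHermitian, conjTranspose_mul, star_eq_conjTranspose, Matrix.mul_assoc,
    hM.eq]

lemma inEigenbasis_mul (hρ : ρ.IsHermitian) (M N : Matrix m m ℂ) :
    hρ.inEigenbasis (M * N) = hρ.inEigenbasis M * hρ.inEigenbasis N := by
  have hU : (hρ.eigenvectorUnitary : Matrix m m ℂ) * star (hρ.eigenvectorUnitary : Matrix m m ℂ)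
      = 1 := Unitary.coe_mul_star_self _
  simp only [inEigenbasis, Matrix.mul_assoc]
  rw [← Matrix.mul_assoc (hρ.eigenvectorUnitary : Matrix m m ℂ), hU, Matrix.one_mul]

lemma trace_mul_eq_sum_eigenvalues_mul (hρ : ρ.IsHermitian) (M : Matrix m m ℂ) :
    (ρ * M).trace = ∑ i, (hρ.eigenvalues i : ℂ) * hρ.inEigenbasis M i i := by
  conv_lhs => rw [hρ.spectral_theorem, Unitary.conjStarAlgAut_apply]
  rw [Matrix.mul_assoc, Matrix.mul_assoc, trace_mul_comm, Matrix.mul_assoc]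
  simp [inEigenbasis, trace, diagonal_mul]

lemma trace_mul_mul_eq_sum (hρ : ρ.IsHermitian) (M N : Matrix m m ℂ) :
    (ρ * (M * N)).trace = ∑ i, ∑ j, (hρ.eigenvalues i : ℂ) *
      (hρ.inEigenbasis M i j * hρ.inEigenbasis N j i) := by
  simp only [trace_mul_eq_sum_eigenvalues_mul hρ, inEigenbasis_mul, mul_apply, Finset.mul_sum]

lemma trace_mul_mul_self_eq_sum (hρ : ρ.IsHermitian) {M : Matrix m m ℂ} (hM : M.IsHermitian) :
    (ρ * (M * M)).trace = ((∑ i, ∑ j, hρ.eigenvalues i * ‖hρ.inEigenbasis M i j‖ ^ 2 : ℝ) : ℂ) := by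
  rw [trace_mul_mul_eq_sum]
  push_cast
  refine Finset.sum_congr rfl fun i _ => Finset.sum_congr rfl fun j _ => ?_
  rw [← (hρ.isHermitian_inEigenbasis hM).apply j i, Complex.star_def, Complex.mul_conj']

end Matrix.IsHermitian

section WeightedSums

variable {m : Type*} [Fintype m]

lemma sum_abs_add_mul_mul_norm_sq_le {μ : m → ℝ} {a b q : ℝ} (ha : 0 ≤ a)
    (hμ : ∀ i, μ i ∈ Set.Icc a b) (hq0 : -1 ≤ q) (hq1 : q ≤ 0) {Z : Matrix m m ℂ}
    (hZ : Z.IsHermitian) :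
    (b - q * a) * ∑ i, ∑ j, |μ i + q * μ j| * ‖Z i j‖ ^ 2 ≤
      (1 - q) * (b + q * a) * ∑ i, ∑ j, μ i * ‖Z i j‖ ^ 2 := by
  have hswap : ∀ f : m → m → ℝ, ∑ i, ∑ j, f j i * ‖Z i j‖ ^ 2 = ∑ i, ∑ j, f i j * ‖Z i j‖ ^ 2 := by
    intro f
    rw [Finset.sum_comm]
    simp only [hZ.norm_apply_swap]
  have hpoint : ∀ i j, (b - q * a) * (|μ i + q * μ j| + |μ j + q * μ i|) * ‖Z i j‖ ^ 2 ≤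
      (1 - q) * (b + q * a) * (μ i + μ j) * ‖Z i j‖ ^ 2 := fun i j =>
    mul_le_mul_of_nonneg_right
      (abs_add_mul_add_abs_add_mul_le ha (hμ i) (hμ j) hq0 hq1) (by positivity)
  have hsum := Finset.sum_le_sum fun i (_ : i ∈ univ) =>
    Finset.sum_le_sum fun j (_ : j ∈ univ) => hpoint i j
  generalize b - q * a = k₁, (1 - q) * (b + q * a) = k₂ at hsum ⊢
  simp only [mul_add, add_mul, sum_add_distrib] at hsum
  rw [hswap fun i j => k₁ * |μ i + q * μ j|, hswap fun i _ => k₂ * μ i] at hsum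
  simp only [mul_assoc, ← mul_sum] at hsum ⊢
  linarith

lemma norm_sum_sum_mul_mul_sq_le (c : m → m → ℝ) (X : Matrix m m ℂ) {Y : Matrix m m ℂ}
    (hY : Y.IsHermitian) :
    ‖∑ i, ∑ j, (c i j : ℂ) * (X i j * Y j i)‖ ^ 2 ≤
      (∑ i, ∑ j, |c i j| * ‖X i j‖ ^ 2) * ∑ i, ∑ j, |c i j| * ‖Y i j‖ ^ 2 := by
  have h := norm_sum_mul_mul_sq_le (fun p : m × m => c p.1 p.2) (fun p => X p.1 p.2)
    (fun p => Y p.2 p.1)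
  simp only [Fintype.sum_prod_type] at h
  simpa only [hY.norm_apply_swap] using h

end WeightedSums

section Centered

variable {n : ℕ} {ρ : Matrix (Fin n) (Fin n) ℂ}

lemma isHermitian_shift (hρ : ρ.IsHermitian) {A : Matrix (Fin n) (Fin n) ℂ}
    (hA : A.IsHermitian) : (shift ρ A).IsHermitian := by
  have htrace : star (ρ * A).trace = (ρ * A).trace := by
    rw [← trace_conjTranspose, conjTranspose_mul, hA.eq, hρ.eq, trace_mul_comm]
  simp only [shift, IsHermitian, conjTranspose_sub, hA.eq, conjTranspose_smul, htrace,
    conjTranspose_one]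

lemma variance_eq_re_trace_mul_shift_mul_shift (htr : ρ.trace = 1)
    (A : Matrix (Fin n) (Fin n) ℂ) : variance ρ A = (ρ * (shift ρ A * shift ρ A)).trace.re := by
  have hexpand : ρ * (shift ρ A * shift ρ A) =
      ρ * (A * A) - (2 * (ρ * A).trace) • (ρ * A) + (ρ * A).trace ^ 2 • ρ := by
    simp only [shift, Matrix.mul_sub, Matrix.sub_mul, smul_mul_assoc, mul_smul_comm,
      Matrix.mul_one, Matrix.one_mul]
    module
  rw [variance, hexpand, trace_add, trace_sub, trace_smul, trace_smul, htr, smul_eq_mul,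
    smul_eq_mul, mul_one]
  congr 1
  ring

lemma variance_eq_sum (hρ : ρ.IsHermitian) (htr : ρ.trace = 1) {A : Matrix (Fin n) (Fin n) ℂ}
    (hA : A.IsHermitian) :
    variance ρ A = ∑ i, ∑ j, hρ.eigenvalues i * ‖hρ.inEigenbasis (shift ρ A) i j‖ ^ 2 := by
  rw [variance_eq_re_trace_mul_shift_mul_shift htr,
    hρ.trace_mul_mul_self_eq_sum (isHermitian_shift hρ hA), Complex.ofReal_re]

lemma trace_mul_qAnti_eq_sum (hρ : ρ.IsHermitian) (q : ℝ) (M N : Matrix (Fin n) (Fin n) ℂ) :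
    (ρ * qAnti q M N).trace = ∑ i, ∑ j, ((hρ.eigenvalues i + q * hρ.eigenvalues j : ℝ) : ℂ) *
      (hρ.inEigenbasis M i j * hρ.inEigenbasis N j i) := by
  have hswapped : (ρ * (N * M)).trace = ∑ i, ∑ j, (hρ.eigenvalues j : ℂ) *
      (hρ.inEigenbasis M i j * hρ.inEigenbasis N j i) := by
    rw [hρ.trace_mul_mul_eq_sum, Finset.sum_comm]
    exact sum_congr rfl fun i _ => sum_congr rfl fun j _ => by ring
  rw [qAnti, Matrix.mul_add, trace_add, mul_smul_comm, trace_smul, hρ.trace_mul_mul_eq_sum,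
    hswapped, smul_eq_mul, mul_sum, ← sum_add_distrib]
  refine sum_congr rfl fun i _ => ?_
  rw [mul_sum, ← sum_add_distrib]
  refine sum_congr rfl fun j _ => ?_
  push_cast
  ring

end Centered

lemma IsOrderedEigenvalues.eigenvalues_mem_Icc {n : ℕ} {ρ : Matrix (Fin (n + 1)) (Fin (n + 1)) ℂ}
    {hρ : ρ.IsHermitian} {lam : Fin (n + 1) → ℝ} (hlam : IsOrderedEigenvalues hρ lam)
    (i : Fin (n + 1)) : hρ.eigenvalues i ∈ Set.Icc (lam 0) (lam (Fin.last n)) := by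
  obtain ⟨hmono, σ, hσ⟩ := hlam
  rw [← σ.apply_symm_apply i, ← hσ]
  exact ⟨hmono (Fin.zero_le _), hmono (Fin.le_last _)⟩

/-- Refined uncertainty relation, case `−1 ≤ q < 0`:
`(λₙ − qλ₁)²·|Tr[ρ{A₀,B₀}_q]|² = (λₙ − qλ₁)²·|Tr[ρ[A₀,B₀]_{−q}]|²` and
`(λₙ − qλ₁)²·|Tr[ρ{A₀,B₀}_q]|² ≤ (1−q)²·(λₙ + qλ₁)²·V_ρ(A)·V_ρ(B)`. -/
theorem refined_uncertainty_of_neg_one_le_neg {n : ℕ}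
    (ρ A B : Matrix (Fin (n + 1)) (Fin (n + 1)) ℂ)
    (hρ : ρ.PosSemidef) (htr : ρ.trace = 1)
    (hA : A.IsHermitian) (hB : B.IsHermitian)
    (lam : Fin (n + 1) → ℝ) (hlam : IsOrderedEigenvalues hρ.1 lam)
    (hlam0 : 0 ≤ lam 0) (q : ℝ) (hq0 : -1 ≤ q) (hq1 : q < 0) :
    (lam (Fin.last n) - q * lam 0) ^ 2 *
        ‖(ρ * qAnti q (shift ρ A) (shift ρ B)).trace‖ ^ 2 =
      (lam (Fin.last n) - q * lam 0) ^ 2 *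
        ‖(ρ * qComm (-q) (shift ρ A) (shift ρ B)).trace‖ ^ 2 ∧
    (lam (Fin.last n) - q * lam 0) ^ 2 *
        ‖(ρ * qAnti q (shift ρ A) (shift ρ B)).trace‖ ^ 2 ≤
      (1 - q) ^ 2 * (lam (Fin.last n) + q * lam 0) ^ 2 *
        variance ρ A * variance ρ B := by
  refine ⟨by simp only [qAnti, qComm, Complex.ofReal_neg, neg_smul, sub_neg_eq_add], ?_⟩
  have hμ := hlam.eigenvalues_mem_Icc
  set μ := hρ.1.eigenvalues
  set X := hρ.1.inEigenbasis (shift ρ A)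
  set Y := hρ.1.inEigenbasis (shift ρ B)
  have hX : X.IsHermitian := hρ.1.isHermitian_inEigenbasis (isHermitian_shift hρ.1 hA)
  have hY : Y.IsHermitian := hρ.1.isHermitian_inEigenbasis (isHermitian_shift hρ.1 hB)
  have hboundA := sum_abs_add_mul_mul_norm_sq_le hlam0 hμ hq0 hq1.le hX
  have hboundB := sum_abs_add_mul_mul_norm_sq_le hlam0 hμ hq0 hq1.le hY
  have hgap : 0 ≤ lam (Fin.last n) - q * lam 0 := by nlinarith [(hμ 0).1.trans (hμ 0).2]
  rw [trace_mul_qAnti_eq_sum hρ.1, variance_eq_sum hρ.1 htr hA, variance_eq_sum hρ.1 htr hB]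
  calc _ ≤ (lam (Fin.last n) - q * lam 0) ^ 2 *
          ((∑ i, ∑ j, |μ i + q * μ j| * ‖X i j‖ ^ 2) * ∑ i, ∑ j, |μ i + q * μ j| * ‖Y i j‖ ^ 2) := by
        gcongr
        exact norm_sum_sum_mul_mul_sq_le (fun i j => μ i + q * μ j) X hY
    _ = _ := by ring
    _ ≤ _ := mul_le_mul hboundA hboundB (mul_nonneg hgap (by positivity))
      ((mul_nonneg hgap (by positivity)).trans hboundA)
    _ = _ := by ring
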